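/- Let G be a connected graph and H be obtained from G by attaching a pendant u to a basis forced vertex v of G. Then the metric bases of G and H coincide up to possibly exchanging v and u; in particular every metric basis of H is either a metric basis of G or obtained from one by replacing v with u. -/

import Mathlib

open SimpleGraph

def isResolving {V : Type*} (G : SimpleGraph V) (S : Set V) : Prop :=
  ∀ x y : V, x ≠ y → ∃ s ∈ S, G.dist s x ≠ G.dist s y

noncomputable def metricDim {V : Type*} (G : SimpleGraph V) : ℕ :=
  sInf {n | ∃ S : Set V, isResolving G S ∧ S.ncard = n}

def isMetricBasis {V : Type*} (G : SimpleGraph V) (S : Set V) : Prop :=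
  isResolving G S ∧ S.ncard = metricDim G

def isBasisForced {V : Type*} (G : SimpleGraph V) (v : V) : Prop :=
  ∀ S : Set V, isMetricBasis G S → v ∈ S

def attachPendant {V : Type*} (G : SimpleGraph V) (v : V) : SimpleGraph (Option V) :=
  SimpleGraph.fromRel (fun x y =>
    (∃ a b, x = some a ∧ y = some b ∧ G.Adj a b) ∨ (x = some v ∧ y = none))

/-!
Distances in `H = attachPendant G v` are those of `G`, and the pendant `u = none` satisfies
`d(u, x) = d(v, x) + 1`. Hence folding `u` onto `v` turns a resolving set of `H` into one of `G`
of no larger size, while replacing `v` by `u` in a resolving set of `G` containing `v` gives one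
of `H` of the same size. Since `v` lies in every metric basis of `G`, the two graphs have the same
metric dimension, so the fold of a metric basis `S` of `H` is a metric basis of `G` of the same
size. The fold is then injective on `S`, and `S` is recovered from its image.
-/

namespace SimpleGraph

variable {V W : Type*} {G : SimpleGraph V} {H : SimpleGraph W}

lemma Connected.dist_le_length_of_eq_or_adj (hG : G.Connected) {f : W → V}
    (hf : ∀ ⦃x y⦄, H.Adj x y → f x = f y ∨ G.Adj (f x) (f y)) {x y : W} (w : H.Walk x y) :
    G.dist (f x) (f y) ≤ w.length := by
  induction w with
  | nil => simp
  | @cons x z y h w ih =>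
    have hstep : G.dist (f x) (f z) ≤ 1 := by
      rcases hf h with heq | hadj
      · simp [heq]
      · exact (dist_eq_one_iff_adj.mpr hadj).le
    calc G.dist (f x) (f y) ≤ G.dist (f x) (f z) + G.dist (f z) (f y) := hG.dist_triangle
      _ ≤ (Walk.cons h w).length := by rw [Walk.length_cons]; omega

lemma Connected.isResolving_univ (hG : G.Connected) : isResolving G Set.univ :=
  fun x _ hxy => ⟨x, trivial, by simpa [eq_comm] using (hG.pos_dist_of_ne hxy).ne⟩

lemma metricDim_le_ncard {S : Set V} (hS : isResolving G S) : metricDim G ≤ S.ncard :=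
  Nat.sInf_le ⟨S, hS, rfl⟩

lemma Connected.exists_isMetricBasis (hG : G.Connected) : ∃ R : Set V, isMetricBasis G R := by
  obtain ⟨R, hR, hcard⟩ := Nat.sInf_mem (s := {n | ∃ S : Set V, isResolving G S ∧ S.ncard = n})
    ⟨_, Set.univ, hG.isResolving_univ, rfl⟩
  exact ⟨R, hR, hcard⟩

end SimpleGraph

section attachPendant

variable {V : Type*} {G : SimpleGraph V} {v : V}

lemma attachPendant_adj_some_some {a b : V} :
    (attachPendant G v).Adj (some a) (some b) ↔ G.Adj a b := by
  simp only [attachPendant, fromRel_adj]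
  refine ⟨?_, fun h => ⟨by simpa using h.ne, .inl (.inl ⟨a, b, rfl, rfl, h⟩)⟩⟩
  rintro ⟨-, h | h⟩ <;> simp at h
  exacts [h, h.symm]

lemma attachPendant_adj_none {x : Option V} :
    (attachPendant G v).Adj x none ↔ x = some v := by
  simp only [attachPendant, fromRel_adj]
  aesop

lemma attachPendant_adj_getD ⦃x y : Option V⦄ (h : (attachPendant G v).Adj x y) :
    x.getD v = y.getD v ∨ G.Adj (x.getD v) (y.getD v) := by
  rcases x with _ | a <;> rcases y with _ | b
  · exact absurd h (attachPendant G v).irrefl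
  · obtain rfl : b = v := by simpa using attachPendant_adj_none.mp h.symm
    exact .inl rfl
  · obtain rfl : a = v := by simpa using attachPendant_adj_none.mp h
    exact .inl rfl
  · exact .inr (attachPendant_adj_some_some.mp h)

def attachPendantHom (G : SimpleGraph V) (v : V) : G →g attachPendant G v where
  toFun := some
  map_rel' := attachPendant_adj_some_some.mpr

lemma attachPendant_dist_some_some (hG : G.Connected) (a b : V) :
    (attachPendant G v).dist (some a) (some b) = G.dist a b := by
  obtain ⟨p, hp⟩ := hG.exists_walk_length_eq_dist a b
  let p' : (attachPendant G v).Walk (some a) (some b) := p.map (attachPendantHom G v)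
  obtain ⟨q, hq⟩ := p'.reachable.exists_walk_length_eq_dist
  have hle : (attachPendant G v).dist (some a) (some b) ≤ G.dist a b :=
    hp ▸ Walk.length_map _ p ▸ dist_le p'
  have hge : G.dist a b ≤ q.length := hG.dist_le_length_of_eq_or_adj (f := (·.getD v)) attachPendant_adj_getD q
  omega

/-- A shortest walk from the pendant must leave it through `v`. -/
lemma attachPendant_dist_none_some (hG : G.Connected) (a : V) :
    (attachPendant G v).dist none (some a) = G.dist v a + 1 := by
  obtain ⟨p, hp⟩ := hG.exists_walk_length_eq_dist v a
  let p' : (attachPendant G v).Walk none (some a) :=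
    .cons (attachPendant_adj_none.mpr rfl).symm (p.map (attachPendantHom G v))
  obtain ⟨q, hq⟩ := p'.reachable.exists_walk_length_eq_dist
  have hle : (attachPendant G v).dist none (some a) ≤ G.dist v a + 1 :=
    hp ▸ Walk.length_map _ p ▸ Walk.length_cons _ _ ▸ dist_le p'
  rcases q with _ | ⟨h, q⟩
  obtain rfl : _ = some v := attachPendant_adj_none.mp h.symm
  have hge : G.dist v a ≤ q.length := hG.dist_le_length_of_eq_or_adj (f := (·.getD v)) attachPendant_adj_getD q
  rw [Walk.length_cons] at hq
  omega

lemma isResolving_image_getD (hG : G.Connected) {S : Set (Option V)}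
    (hS : isResolving (attachPendant G v) S) : isResolving G ((·.getD v) '' S) := by
  intro x y hxy
  obtain ⟨s, hsS, hd⟩ := hS (some x) (some y) (by simpa using hxy)
  refine ⟨s.getD v, Set.mem_image_of_mem _ hsS, ?_⟩
  rcases s with _ | a
  · simpa [attachPendant_dist_none_some hG] using hd
  · simpa [attachPendant_dist_some_some hG] using hd

lemma isResolving_insert_none (hG : G.Connected) {R : Set V} (hR : isResolving G R)
    (hvR : v ∈ R) : isResolving (attachPendant G v) (insert none (some '' (R \ {v}))) := by
  rintro (_ | a) (_ | b) hxy
  · exact absurd rfl hxy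
  · exact ⟨none, Set.mem_insert _ _, by simp [attachPendant_dist_none_some hG]⟩
  · exact ⟨none, Set.mem_insert _ _, by simp [attachPendant_dist_none_some hG]⟩
  obtain ⟨s, hs, hd⟩ := hR a b (by simpa using hxy)
  by_cases hsv : s = v
  · subst hsv
    exact ⟨none, Set.mem_insert _ _, by simpa [attachPendant_dist_none_some hG] using hd⟩
  · exact ⟨some s, Set.mem_insert_of_mem _ ⟨s, ⟨hs, hsv⟩, rfl⟩,
      by simpa [attachPendant_dist_some_some hG] using hd⟩

lemma metricDim_attachPendant_le [Finite V] (hG : G.Connected) (hv : isBasisForced G v) :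
    metricDim (attachPendant G v) ≤ metricDim G := by
  obtain ⟨R, hR⟩ := hG.exists_isMetricBasis
  have hvR : v ∈ R := hv R hR
  calc metricDim (attachPendant G v) ≤ (insert none (some '' (R \ {v}))).ncard :=
        metricDim_le_ncard (isResolving_insert_none hG hR.1 hvR)
    _ = R.ncard := by
        rw [Set.ncard_insert_of_notMem (by simp), (Option.some_injective V).injOn.ncard_image,
          Set.ncard_sdiff_singleton_add_one hvR]
    _ = metricDim G := hR.2

lemma isMetricBasis_image_getD [Finite V] (hG : G.Connected) (hv : isBasisForced G v)
    {S : Set (Option V)} (hS : isMetricBasis (attachPendant G v) S) :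
    isMetricBasis G ((·.getD v) '' S) ∧ Set.InjOn (·.getD v) S := by
  have hres := isResolving_image_getD hG hS.1
  have hlow := metricDim_le_ncard hres
  have himage := Set.ncard_image_le (f := (·.getD v)) S.toFinite
  have hup := metricDim_attachPendant_le hG hv
  have hcard := hS.2
  exact ⟨⟨hres, by omega⟩, Set.injOn_of_ncard_image_eq (by omega)⟩

end attachPendant

namespace Option

variable {α : Type*} {S : Set (Option α)}

lemma eq_image_some_image_getD (hS : none ∉ S) (a : α) : S = some '' ((·.getD a) '' S) := by
  ext (_ | b)
  · simp [hS]
  · constructor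
    · exact fun hb => ⟨b, ⟨some b, hb, rfl⟩, rfl⟩
    · rintro ⟨_, ⟨_ | c, hc, rfl⟩, h⟩
      · exact absurd hc hS
      · simpa [← h] using hc

lemma eq_insert_none_image_some_image_getD (hS : none ∈ S) {a : α}
    (hinj : Set.InjOn (·.getD a) S) : S = insert none (some '' ((·.getD a) '' S \ {a})) := by
  ext (_ | b)
  · simp [hS]
  · constructor
    · refine fun hb => Or.inr ⟨b, ⟨⟨some b, hb, rfl⟩, ?_⟩, rfl⟩
      rintro rfl
      exact Option.some_ne_none _ (hinj hb hS rfl)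
    · rintro (h | ⟨_, ⟨⟨_ | c, hc, rfl⟩, hne⟩, h⟩)
      · exact absurd h (Option.some_ne_none b)
      · exact absurd rfl hne
      · simpa [← h] using hc

end Option

theorem stmt4 {V : Type*} [Fintype V] (G : SimpleGraph V) (hG : G.Connected)
    (v : V) (hv : isBasisForced G v)
    (S : Set (Option V)) (hS : isMetricBasis (attachPendant G v) S) :
    (∃ R : Set V, isMetricBasis G R ∧ S = some '' R) ∨
    (∃ R : Set V, isMetricBasis G R ∧ v ∈ R ∧
      S = insert (none : Option V) (some '' (R \ {v}))) := by
  obtain ⟨hR, hinj⟩ := isMetricBasis_image_getD hG hv hS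
  by_cases hnone : none ∈ S
  · exact .inr ⟨_, hR, ⟨none, hnone, rfl⟩,
      Option.eq_insert_none_image_some_image_getD hnone hinj⟩
  · exact .inl ⟨_, hR, Option.eq_image_some_image_getD hnone v⟩
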